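/- Let Λ be a ring (or Artin algebra). The class ^⊥(GInj Λ) = {X : Ext^i(X, Y) = 0 for all i > 0 and all Gorenstein injective Y} is a thick subcategory of Mod Λ: it is closed under direct summands, extensions, kernels of epimorphisms between its objects, and cokernels of monomorphisms between its objects. -/

import Mathlib

open CategoryTheory Limits Opposite

universe u v

/-- `Ext^i(X, Y) = 0` for all `i > 0`. -/
noncomputable def ExtVanish (Λ : Type) [Ring Λ] (X Y : ModuleCat.{0} Λ) : Prop :=
  ∀ i : ℕ, 0 < i → Subsingleton (((Ext ℤ (ModuleCat.{0} Λ) i).obj (op X)).obj Y)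

/-- The right `Ext`-orthogonal complement `𝒳^⊥` of a class of modules. -/
noncomputable def rightPerp (Λ : Type) [Ring Λ] (𝒳 : Set (ModuleCat.{0} Λ)) :
    Set (ModuleCat.{0} Λ) :=
  {Y | ∀ X ∈ 𝒳, ExtVanish Λ X Y}

/-- The left `Ext`-orthogonal complement `^⊥𝒴` of a class of modules. -/
noncomputable def leftPerp (Λ : Type) [Ring Λ] (𝒴 : Set (ModuleCat.{0} Λ)) :
    Set (ModuleCat.{0} Λ) :=
  {X | ∀ Y ∈ 𝒴, ExtVanish Λ X Y}

/-- A cotorsion pair `(𝒳, 𝒴)` for `Mod Λ`: mutual `Ext`-orthogonality plus existence of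
special right `𝒳`-approximations and special left `𝒴`-approximations. -/
structure IsCotorsionPair (Λ : Type) [Ring Λ] (𝒳 𝒴 : Set (ModuleCat.{0} Λ)) : Prop where
  left_eq : 𝒳 = leftPerp Λ 𝒴
  right_eq : 𝒴 = rightPerp Λ 𝒳
  special_right : ∀ C : ModuleCat.{0} Λ, ∃ S : ShortComplex (ModuleCat.{0} Λ),
    S.ShortExact ∧ Nonempty (S.X₃ ≅ C) ∧ S.X₂ ∈ 𝒳 ∧ S.X₁ ∈ rightPerp Λ 𝒳
  special_left : ∀ A : ModuleCat.{0} Λ, ∃ S : ShortComplex (ModuleCat.{0} Λ),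
    S.ShortExact ∧ Nonempty (S.X₁ ≅ A) ∧ S.X₂ ∈ 𝒴 ∧ S.X₃ ∈ leftPerp Λ 𝒴

/-- A resolving subcategory: contains the projectives, closed under extensions and
kernels of epimorphisms. -/
def IsResolving (Λ : Type) [Ring Λ] (𝒞 : Set (ModuleCat.{0} Λ)) : Prop :=
  (∀ P : ModuleCat.{0} Λ, Projective P → P ∈ 𝒞) ∧
  (∀ S : ShortComplex (ModuleCat.{0} Λ), S.ShortExact → S.X₁ ∈ 𝒞 → S.X₃ ∈ 𝒞 → S.X₂ ∈ 𝒞) ∧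
  (∀ S : ShortComplex (ModuleCat.{0} Λ), S.ShortExact → S.X₂ ∈ 𝒞 → S.X₃ ∈ 𝒞 → S.X₁ ∈ 𝒞)

/-- A totally acyclic complex of projectives: a complex of projective modules such that
`Hom(P, X)` and `Hom(X, P)` are acyclic for every projective `P`. -/
structure IsTotAcyclicProj (Λ : Type) [Ring Λ] (T : CochainComplex (ModuleCat.{0} Λ) ℤ) :
    Prop where
  proj : ∀ n : ℤ, Projective (T.X n)
  homFrom : ∀ P : ModuleCat.{0} Λ, Projective P → ∀ (n : ℤ) (f : P ⟶ T.X n),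
    f ≫ T.d n (n + 1) = 0 → ∃ g : P ⟶ T.X (n - 1), f = g ≫ T.d (n - 1) n
  homTo : ∀ P : ModuleCat.{0} Λ, Projective P → ∀ (n : ℤ) (f : T.X n ⟶ P),
    T.d (n - 1) n ≫ f = 0 → ∃ g : T.X (n + 1) ⟶ P, f = T.d n (n + 1) ≫ g

/-- A totally acyclic complex of injectives: a complex of injective modules such that
`Hom(J, X)` and `Hom(X, J)` are acyclic for every injective `J`. -/
structure IsTotAcyclicInj (Λ : Type) [Ring Λ] (T : CochainComplex (ModuleCat.{0} Λ) ℤ) :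
    Prop where
  inj : ∀ n : ℤ, Injective (T.X n)
  homFrom : ∀ J : ModuleCat.{0} Λ, Injective J → ∀ (n : ℤ) (f : J ⟶ T.X n),
    f ≫ T.d n (n + 1) = 0 → ∃ g : J ⟶ T.X (n - 1), f = g ≫ T.d (n - 1) n
  homTo : ∀ J : ModuleCat.{0} Λ, Injective J → ∀ (n : ℤ) (f : T.X n ⟶ J),
    T.d (n - 1) n ≫ f = 0 → ∃ g : T.X (n + 1) ⟶ J, f = T.d n (n + 1) ≫ g

/-- A module is Gorenstein projective if it is the cokernel `Coker(X⁻¹ → X⁰)` of a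
totally acyclic complex of projectives. -/
noncomputable def IsGorensteinProjective (Λ : Type) [Ring Λ] (G : ModuleCat.{0} Λ) : Prop :=
  ∃ T : CochainComplex (ModuleCat.{0} Λ) ℤ, IsTotAcyclicProj Λ T ∧
    Nonempty (G ≅ cokernel (T.d (-1) 0))

/-- A module is Gorenstein injective if it is the kernel `Ker(X⁰ → X¹)` of a
totally acyclic complex of injectives. -/
noncomputable def IsGorensteinInjective (Λ : Type) [Ring Λ] (G : ModuleCat.{0} Λ) : Prop :=
  ∃ T : CochainComplex (ModuleCat.{0} Λ) ℤ, IsTotAcyclicInj Λ T ∧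
    Nonempty (G ≅ kernel (T.d 0 1))

/-!
For a short exact sequence `0 → X₁ → X₂ → X₃ → 0`, the long exact `Ext(-, Y)`-sequence shows that
vanishing of `Ext^{≥1}(-, Y)` on two of the terms gives it on the third, except that `Ext¹(X₃, Y)`
is only controlled modulo the image of `Hom(X₁, Y)`. For Gorenstein injective `Y` this gap closes
by dimension shifting: `Y` is a quotient `I/Y'` of an injective by another Gorenstein injective,
so `Ext¹(X₃, Y) ↪ Ext²(X₃, Y') = 0`.

Both `Ext`s in play, the derived functor of `Hom` in `ExtVanish` and Mathlib's derived-category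
`Ext` that carries the long exact sequences, are the cohomology of `Hom(P, Y)` for a projective
resolution `P` of `X`.
-/

universe w

namespace CategoryTheory

namespace Abelian

variable {C : Type u} [Category.{v} C] [Abelian C] [HasExt.{w} C]

def leftExtOrthogonal (𝒴 : Set C) : Set C :=
  {X | ∀ Y ∈ 𝒴, ∀ n : ℕ, Subsingleton (Ext X Y (n + 1))}

lemma Ext.subsingleton_of_retract {X X' Y : C} (i : X ⟶ X') (r : X' ⟶ X) (hir : i ≫ r = 𝟙 X)
    {n : ℕ} (h : Subsingleton (Ext X' Y n)) : Subsingleton (Ext X Y n) := by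
  refine subsingleton_of_forall_eq 0 fun α => ?_
  rw [← Ext.mk₀_id_comp α, ← hir, ← Ext.mk₀_comp_mk₀_assoc, h.allEq ((Ext.mk₀ r).comp α _) 0,
    Ext.comp_zero]

lemma leftExtOrthogonal.mem_of_retract {𝒴 : Set C} {X X' : C} (i : X ⟶ X') (r : X' ⟶ X)
    (hir : i ≫ r = 𝟙 X) (hX' : X' ∈ leftExtOrthogonal 𝒴) : X ∈ leftExtOrthogonal 𝒴 :=
  fun Y hY n => Ext.subsingleton_of_retract i r hir (hX' Y hY n)

end Abelian

namespace ShortComplex.ShortExact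

open Abelian

variable {C : Type u} [Category.{v} C] [Abelian C] [HasExt.{w} C]
  {S : ShortComplex C} (hS : S.ShortExact)
include hS

lemma subsingleton_ext_X₂ (Y : C) {n : ℕ} (h₁ : Subsingleton (Ext S.X₁ Y n))
    (h₃ : Subsingleton (Ext S.X₃ Y n)) : Subsingleton (Ext S.X₂ Y n) := by
  refine subsingleton_of_forall_eq 0 fun α => ?_
  obtain ⟨β, rfl⟩ := Ext.contravariant_sequence_exact₂ hS Y α (h₁.allEq _ _)
  rw [h₃.allEq β 0, Ext.comp_zero]

lemma subsingleton_ext_X₁ (Y : C) {n : ℕ} (h₂ : Subsingleton (Ext S.X₂ Y n))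
    (h₃ : Subsingleton (Ext S.X₃ Y (n + 1))) : Subsingleton (Ext S.X₁ Y n) := by
  refine subsingleton_of_forall_eq 0 fun α => ?_
  obtain ⟨β, rfl⟩ := Ext.contravariant_sequence_exact₁ hS Y α (add_comm 1 n) (h₃.allEq _ _)
  rw [h₂.allEq β 0, Ext.comp_zero]

lemma subsingleton_ext_X₃ (Y : C) {n : ℕ} (h₁ : Subsingleton (Ext S.X₁ Y n))
    (h₂ : Subsingleton (Ext S.X₂ Y (n + 1))) : Subsingleton (Ext S.X₃ Y (n + 1)) := by
  refine subsingleton_of_forall_eq 0 fun α => ?_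
  obtain ⟨β, rfl⟩ := Ext.contravariant_sequence_exact₃ hS Y α (h₂.allEq _ _) (add_comm 1 n)
  rw [h₁.allEq β 0, Ext.comp_zero]

lemma subsingleton_ext_X₃_of_injective (X : C) [Injective S.X₂] {n : ℕ}
    (h₁ : Subsingleton (Ext X S.X₁ (n + 2))) : Subsingleton (Ext X S.X₃ (n + 1)) := by
  refine subsingleton_of_forall_eq 0 fun α => ?_
  obtain ⟨β, rfl⟩ := Ext.covariant_sequence_exact₃ X hS α rfl (h₁.allEq _ _)
  rw [Ext.eq_zero_of_injective β, Ext.zero_comp]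

variable {𝒴 : Set C}

lemma X₂_mem_leftExtOrthogonal (h₁ : S.X₁ ∈ leftExtOrthogonal 𝒴)
    (h₃ : S.X₃ ∈ leftExtOrthogonal 𝒴) : S.X₂ ∈ leftExtOrthogonal 𝒴 :=
  fun Y hY n => hS.subsingleton_ext_X₂ Y (h₁ Y hY n) (h₃ Y hY n)

lemma X₁_mem_leftExtOrthogonal (h₂ : S.X₂ ∈ leftExtOrthogonal 𝒴)
    (h₃ : S.X₃ ∈ leftExtOrthogonal 𝒴) : S.X₁ ∈ leftExtOrthogonal 𝒴 :=
  fun Y hY n => hS.subsingleton_ext_X₁ Y (h₂ Y hY n) (h₃ Y hY (n + 1))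

lemma X₃_mem_leftExtOrthogonal
    (h𝒴 : ∀ Y ∈ 𝒴, ∃ S' : ShortComplex C, S'.ShortExact ∧ Injective S'.X₂ ∧ S'.X₁ ∈ 𝒴 ∧
      S'.X₃ = Y)
    (h₁ : S.X₁ ∈ leftExtOrthogonal 𝒴) (h₂ : S.X₂ ∈ leftExtOrthogonal 𝒴) :
    S.X₃ ∈ leftExtOrthogonal 𝒴 := by
  have hge2 : ∀ Y ∈ 𝒴, ∀ n : ℕ, Subsingleton (Ext S.X₃ Y (n + 2)) :=
    fun Y hY n => hS.subsingleton_ext_X₃ Y (h₁ Y hY n) (h₂ Y hY (n + 1))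
  rintro Y hY (_ | n)
  · obtain ⟨S', hS', hI, hS'₁, rfl⟩ := h𝒴 Y hY
    exact hS'.subsingleton_ext_X₃_of_injective S.X₃ (hge2 S'.X₁ hS'₁ 0)
  · exact hge2 Y hY n

end ShortComplex.ShortExact

namespace ProjectiveResolution

variable {C : Type u} [Category.{v} C] [Abelian C] {X : C} (P : ProjectiveResolution X)

/-- Exactness of `Hom(P, Y)` in degree `n + 1`. -/
def HomExactAt (Y : C) (n : ℕ) : Prop :=
  ∀ f : P.complex.X (n + 1) ⟶ Y, P.complex.d (n + 2) (n + 1) ≫ f = 0 →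
    ∃ g : P.complex.X n ⟶ Y, P.complex.d (n + 1) n ≫ g = f

lemma subsingleton_ext_succ_iff [HasExt.{w} C] (Y : C) (n : ℕ) :
    Subsingleton (Abelian.Ext X Y (n + 1)) ↔ P.HomExactAt Y n := by
  refine ⟨fun _ f hf => (P.extMk_eq_zero_iff f (n + 2) rfl hf n rfl).1 (Subsingleton.elim _ _),
    fun h => subsingleton_of_forall_eq 0 fun α => ?_⟩
  obtain ⟨f, hf, rfl⟩ := P.extMk_surjective α (n + 2) rfl
  exact (P.extMk_eq_zero_iff f (n + 2) rfl hf n rfl).2 (h f hf)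

variable {R : Type*} [Ring R] [Linear R C] [EnoughProjectives C]

lemma subsingleton_derivedExt_succ_iff (Y : C) (n : ℕ) :
    Subsingleton (((Ext R C (n + 1)).obj (op X)).obj Y) ↔ P.HomExactAt Y n := by
  rw [((forget (ModuleCat R)).mapIso (P.isoExt (n + 1) Y)).toEquiv.subsingleton_congr,
    ← ModuleCat.isZero_iff_subsingleton, ← HomologicalComplex.exactAt_iff_isZero_homology,
    HomologicalComplex.exactAt_iff' _ n (n + 1) (n + 2) (by simp) (by simp),
    ShortComplex.moduleCat_exact_iff]
  rfl

end ProjectiveResolution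

end CategoryTheory

open CategoryTheory.Abelian

lemma extVanish_iff {Λ : Type} [Ring Λ] (X Y : ModuleCat.{0} Λ) :
    ExtVanish Λ X Y ↔ ∀ n : ℕ, Subsingleton (Abelian.Ext X Y (n + 1)) := by
  let P := ProjectiveResolution.of X
  refine ⟨fun h n => ?_, fun h i hi => ?_⟩
  · exact (P.subsingleton_ext_succ_iff Y n).2
      ((P.subsingleton_derivedExt_succ_iff Y n).1 (h (n + 1) n.succ_pos))
  · obtain ⟨n, rfl⟩ := Nat.exists_eq_add_one_of_ne_zero hi.ne'
    exact (P.subsingleton_derivedExt_succ_iff Y n).2 ((P.subsingleton_ext_succ_iff Y n).1 (h n))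

lemma leftPerp_eq_leftExtOrthogonal {Λ : Type} [Ring Λ] (𝒴 : Set (ModuleCat.{0} Λ)) :
    leftPerp Λ 𝒴 = leftExtOrthogonal 𝒴 :=
  Set.ext fun X => forall₂_congr fun Y _ => extVanish_iff X Y

namespace IsTotAcyclicInj

variable {Λ : Type} [Ring Λ] {T : CochainComplex (ModuleCat.{0} Λ) ℤ}

lemma homFrom_of_eq (hT : IsTotAcyclicInj Λ T) {J : ModuleCat.{0} Λ} (hJ : Injective J)
    {i j k : ℤ} (hij : i + 1 = j) (hjk : j + 1 = k) (f : J ⟶ T.X j) (hf : f ≫ T.d j k = 0) :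
    ∃ g : J ⟶ T.X i, f = g ≫ T.d i j := by
  obtain rfl : i = j - 1 := by omega
  subst hjk
  exact hT.homFrom J hJ j f hf

lemma homTo_of_eq (hT : IsTotAcyclicInj Λ T) {J : ModuleCat.{0} Λ} (hJ : Injective J)
    {i j k : ℤ} (hij : i + 1 = j) (hjk : j + 1 = k) (f : T.X j ⟶ J) (hf : T.d i j ≫ f = 0) :
    ∃ g : T.X k ⟶ J, f = T.d j k ≫ g := by
  obtain rfl : i = j - 1 := by omega
  subst hjk
  exact hT.homTo J hJ j f hf

lemma exact (hT : IsTotAcyclicInj Λ T) {i j k : ℤ} (hij : i + 1 = j) (hjk : j + 1 = k) :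
    (T.sc' i j k).Exact := by
  let S := T.sc' i j k
  obtain ⟨g, hg⟩ : ∃ g : S.X₃ ⟶ Injective.under S.opcycles,
      S.pOpcycles ≫ Injective.ι S.opcycles = S.g ≫ g :=
    hT.homTo_of_eq (Injective.injective_under S.opcycles) hij hjk
      (S.pOpcycles ≫ Injective.ι S.opcycles) ((S.f_pOpcycles_assoc _).trans zero_comp)
  rw [S.exact_iff_iCycles_pOpcycles_zero, ← cancel_mono (Injective.ι S.opcycles),
    Category.assoc, hg, S.iCycles_g_assoc, zero_comp, zero_comp]

end IsTotAcyclicInj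

/-- Unlike Mathlib's shift `T⟦c⟧`, no sign `c.negOnePow` on the differential, so that
`kernel ((T.shiftIndex c).d 0 1)` is `kernel (T.d (0 + c) (1 + c))` on the nose. -/
def CochainComplex.shiftIndex {C : Type*} [Category C] [HasZeroMorphisms C]
    (T : CochainComplex C ℤ) (c : ℤ) : CochainComplex C ℤ where
  X n := T.X (n + c)
  d m n := T.d (m + c) (n + c)
  shape m n h := T.shape _ _ (by simp only [ComplexShape.up_Rel] at *; omega)

lemma IsTotAcyclicInj.shiftIndex {Λ : Type} [Ring Λ] {T : CochainComplex (ModuleCat.{0} Λ) ℤ}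
    (hT : IsTotAcyclicInj Λ T) (c : ℤ) : IsTotAcyclicInj Λ (T.shiftIndex c) where
  inj n := hT.inj (n + c)
  homFrom J hJ n f hf := hT.homFrom_of_eq hJ (by ring) (by ring) f hf
  homTo J hJ n f hf := hT.homTo_of_eq hJ (by ring) (by ring) f hf

lemma IsGorensteinInjective.exists_shortExact {Λ : Type} [Ring Λ] {G : ModuleCat.{0} Λ}
    (hG : IsGorensteinInjective Λ G) :
    ∃ S : ShortComplex (ModuleCat.{0} Λ), S.ShortExact ∧ Injective S.X₂ ∧
      IsGorensteinInjective Λ S.X₁ ∧ S.X₃ = G := by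
  obtain ⟨T, hT, ⟨e⟩⟩ := hG
  let S := ShortComplex.mk (kernel.ι (T.d (-1) 0))
    (kernel.lift (T.d 0 1) (T.d (-1) 0) (T.d_comp_d _ _ _) ≫ e.inv)
    (by simp [← cancel_mono (e.hom ≫ kernel.ι (T.d 0 1))])
  have hS : S.Exact := S.exact_of_f_is_kernel
    (isKernelOfComp (e.hom ≫ kernel.ι (T.d 0 1)) _ (kernelIsKernel (T.d (-1) 0)) S.zero
      (by simp [S]))
  have : Epi (kernel.lift (T.d 0 1) (T.d (-1) 0) (T.d_comp_d _ _ _)) :=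
    (T.sc' (-1) 0 1).exact_iff_epi_kernel_lift.1 (hT.exact (by norm_num) (by norm_num))
  exact ⟨S, { exact := hS }, hT.inj (-1),
    ⟨T.shiftIndex (-1), hT.shiftIndex (-1), ⟨Iso.refl _⟩⟩, rfl⟩

/-- The class `^⊥(GInj Λ)` is a thick subcategory of `Mod Λ`: closed under
direct summands, extensions, kernels of epimorphisms, and cokernels of monomorphisms. -/
theorem stmt12 (Λ : Type) [Ring Λ] :
    (∀ X Y : ModuleCat.{0} Λ, (∃ (i : X ⟶ Y) (r : Y ⟶ X), i ≫ r = 𝟙 X) →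
      Y ∈ leftPerp Λ {G | IsGorensteinInjective Λ G} →
      X ∈ leftPerp Λ {G | IsGorensteinInjective Λ G}) ∧
    (∀ S : ShortComplex (ModuleCat.{0} Λ), S.ShortExact →
      ((S.X₁ ∈ leftPerp Λ {G | IsGorensteinInjective Λ G} →
        S.X₃ ∈ leftPerp Λ {G | IsGorensteinInjective Λ G} →
        S.X₂ ∈ leftPerp Λ {G | IsGorensteinInjective Λ G}) ∧
       (S.X₂ ∈ leftPerp Λ {G | IsGorensteinInjective Λ G} →
        S.X₃ ∈ leftPerp Λ {G | IsGorensteinInjective Λ G} →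
        S.X₁ ∈ leftPerp Λ {G | IsGorensteinInjective Λ G}) ∧
       (S.X₁ ∈ leftPerp Λ {G | IsGorensteinInjective Λ G} →
        S.X₂ ∈ leftPerp Λ {G | IsGorensteinInjective Λ G} →
        S.X₃ ∈ leftPerp Λ {G | IsGorensteinInjective Λ G}))) := by
  have hGI : ∀ G ∈ {G | IsGorensteinInjective Λ G}, ∃ S : ShortComplex (ModuleCat.{0} Λ),
      S.ShortExact ∧ Injective S.X₂ ∧ S.X₁ ∈ {G | IsGorensteinInjective Λ G} ∧ S.X₃ = G :=
    fun _ hG => hG.exists_shortExact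
  simp only [leftPerp_eq_leftExtOrthogonal]
  exact ⟨fun X Y ⟨i, r, hir⟩ => leftExtOrthogonal.mem_of_retract i r hir,
    fun S hS => ⟨hS.X₂_mem_leftExtOrthogonal, hS.X₁_mem_leftExtOrthogonal,
      hS.X₃_mem_leftExtOrthogonal hGI⟩⟩
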